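/- arXiv:2003.08066 — 3 statements merged into one kernel-verified Lean document; each statement's English description precedes it below -/
import Mathlib

section
/- Fix an integer n ≥ 1 and p = (p₀,…,p_{n−1}) ∈ [0,1]^n, and let X ~ X(n,p) be a multi-parameter random simplicial complex. Then for every Y ∈ Sₙ, P(Y ⊆ X) = ∏_{i=0}^{n−1} p_i^{f_i(Y)} (with the convention 0⁰ = 1). -/
open MeasureTheory Finset Filter


/-- A (sub)complex of the complete complex on the vertex type `V`:
a family of finite subsets closed under taking subsets and containing `∅`. -/
def SComplex {V : Type*} [DecidableEq V] (Y : Finset (Finset V)) : Prop :=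
  ∅ ∈ Y ∧ ∀ σ ∈ Y, ∀ τ ∈ σ.powerset, τ ∈ Y

instance {V : Type*} [DecidableEq V] :
    DecidablePred (fun Y : Finset (Finset V) => SComplex Y) :=
  fun Y => decidable_of_iff (∅ ∈ Y ∧ ∀ σ ∈ Y, ∀ τ ∈ σ.powerset, τ ∈ Y) Iff.rfl

/-- `scount Y m` = number of simplices of `Y` with `m` vertices (i.e. `(m-1)`-simplices);
`f_k(Y) = scount Y (k+1)` and `f_{-1}(Y) = scount Y 0`. -/
def scount {V : Type*} (Y : Finset (Finset V)) (m : ℕ) : ℕ :=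
  (Y.filter (fun σ => σ.card = m)).card

/-- Number of external `i`-simplices of `Y` in the complete complex on `Fin n`:
`i`-simplices `σ ∉ Y` all of whose strict subsets lie in `Y`. -/
def ecount {n : ℕ} (Y : Finset (Finset (Fin n))) (i : ℕ) : ℕ :=
  (Finset.univ.filter (fun σ : Finset (Fin n) =>
    σ.card = i + 1 ∧ σ ∉ Y ∧ ∀ τ ∈ σ.powerset, τ ≠ σ → τ ∈ Y)).card

/-- The weight `∏_{i=0}^{n-1} p_i^{f_i(Y)} (1-p_i)^{e_i(Y)}` of the
multi-parameter random simplicial complex model. -/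
noncomputable def mpWeight {n : ℕ} (p : Fin n → ℝ) (Y : Finset (Finset (Fin n))) : ℝ :=
  ∏ i : Fin n, p i ^ scount Y (i.1 + 1) * (1 - p i) ^ ecount Y i.1

/-- The probability of an event, as a real number. -/
noncomputable def prb {Ω : Type*} [MeasurableSpace Ω] (μ : Measure Ω) (A : Set Ω) : ℝ :=
  (μ A).toReal

/-- Conditional probability `P(A | B)`, as a real number. -/
noncomputable def condP {Ω : Type*} [MeasurableSpace Ω] (μ : Measure Ω) (A B : Set Ω) : ℝ :=
  prb μ (A ∩ B) / prb μ B

/-- A random subcomplex is homogeneous if its distribution is invariant under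
every permutation of the vertices. -/
def Homogeneous {n : ℕ} {Ω : Type*} [MeasurableSpace Ω] (μ : Measure Ω)
    (X : Ω → Finset (Finset (Fin n))) : Prop :=
  ∀ (g : Equiv.Perm (Fin n)) (Y : Finset (Finset (Fin n))),
    prb μ {ω | Finset.image (fun σ => σ.image (⇑g)) (X ω) = Y} = prb μ {ω | X ω = Y}

/-- Spatial independence of a random subcomplex. -/
def SpatInd {n : ℕ} {Ω : Type*} [MeasurableSpace Ω] (μ : Measure Ω)
    (X : Ω → Finset (Finset (Fin n))) : Prop :=
  ∀ Y₁ Y₂ : Finset (Finset (Fin n)), SComplex Y₁ → SComplex Y₂ →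
    prb μ {ω | Y₁ ∪ Y₂ ⊆ X ω} * prb μ {ω | Y₁ ∩ Y₂ ⊆ X ω} =
      prb μ {ω | Y₁ ⊆ X ω} * prb μ {ω | Y₂ ⊆ X ω}

/-- The `k`-dimensional standard simplex `{0, 1, …, k}` in `Fin n`
(for `k = -1` this is the empty simplex). -/
def stdSimp (n : ℕ) (k : ℤ) : Finset (Fin n) :=
  Finset.univ.filter (fun v => (v : ℤ) ≤ k)

/-- The `k`-dimensional simplex `{1, 2, …, k+1}` in `Fin n`,
sharing `k` vertices with `stdSimp n k`. -/
def stdSimp' (n : ℕ) (k : ℕ) : Finset (Fin n) :=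
  Finset.univ.filter (fun v => 1 ≤ (v : ℕ) ∧ (v : ℕ) ≤ k + 1)

/-- The parameter `q_k = P(τ ∈ X)` for a `k`-simplex `τ` (with `q_{-1} = 1`). -/
noncomputable def qpar {n : ℕ} {Ω : Type*} [MeasurableSpace Ω] (μ : Measure Ω)
    (X : Ω → Finset (Finset (Fin n))) (k : ℤ) : ℝ :=
  if k < 0 then 1 else prb μ {ω | stdSimp n k ∈ X ω}

/-- The parameter `r_k = P(σ ∈ X | τ ∈ X)` for a `(k+1)`-simplex `σ` containing the
`k`-simplex `τ`, if `q_k > 0`, and `0` otherwise (with `r_{-1} = q_0`). -/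
noncomputable def rpar {n : ℕ} {Ω : Type*} [MeasurableSpace Ω] (μ : Measure Ω)
    (X : Ω → Finset (Finset (Fin n))) (k : ℤ) : ℝ :=
  if 0 < qpar μ X k then
    condP μ {ω | stdSimp n (k + 1) ∈ X ω} {ω | stdSimp n k ∈ X ω}
  else 0

/-- The parameter `s_k = P(τ₁ ∪ τ₂ ∈ X | τ₁ ∈ X, τ₂ ∈ X)` for `k`-simplices `τ₁, τ₂`
sharing `k` vertices, if `P(τ₁ ∈ X, τ₂ ∈ X) > 0`, and `0` otherwise. -/
noncomputable def spar {n : ℕ} {Ω : Type*} [MeasurableSpace Ω] (μ : Measure Ω)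
    (X : Ω → Finset (Finset (Fin n))) (k : ℕ) : ℝ :=
  if 0 < prb μ ({ω | stdSimp n k ∈ X ω} ∩ {ω | stdSimp' n k ∈ X ω}) then
    condP μ {ω | stdSimp n (k + 1) ∈ X ω}
      ({ω | stdSimp n k ∈ X ω} ∩ {ω | stdSimp' n k ∈ X ω})
  else 0


/-!
Realise `X(n, p)` by independent coins: every simplex `σ` is kept with probability
`p_{dim σ}` (the empty simplex always), and `X` consists of the simplices all of whose faces
are kept. Then `X = Z` exactly when the coins of the simplices of `Z` show heads and those of
the external simplices of `Z` show tails, which has probability `mpWeight p Z`; and `Y ⊆ X`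
exactly when the coins of the simplices of `Y` show heads, which has probability
`∏ p_i^{f_i(Y)}`. Summing the first identity over all complexes `Z ⊇ Y` gives the second.
-/

section BernoulliProduct

variable {ι R : Type*} [Fintype ι] [DecidableEq ι] [CommRing R]

def bernoulliWeight (q : ι → R) (ω : ι → Bool) : R :=
  ∏ i, if ω i then q i else 1 - q i

lemma sum_bernoulliWeight_filter (q : ι → R) {A B : Finset ι} (hAB : Disjoint A B) :
    ∑ ω with (∀ i ∈ A, ω i = true) ∧ ∀ i ∈ B, ω i = false, bernoulliWeight q ω =
      (∏ i ∈ A, q i) * ∏ i ∈ B, (1 - q i) := by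
  let t : ι → Finset Bool := fun i => if i ∈ A then {true} else if i ∈ B then {false} else univ
  have hfilter : univ.filter (fun ω : ι → Bool => (∀ i ∈ A, ω i = true) ∧ ∀ i ∈ B, ω i = false)
      = Fintype.piFinset t := by
    ext ω
    simp only [mem_filter, mem_univ, true_and, Fintype.mem_piFinset, t]
    refine ⟨fun ⟨hA, hB⟩ i => ?_, fun h => ⟨fun i hi => ?_, fun i hi => ?_⟩⟩
    · split_ifs with hiA hiB
      exacts [mem_singleton.2 (hA i hiA), mem_singleton.2 (hB i hiB), mem_univ _]
    · simpa [hi] using h i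
    · simpa [hi, disjoint_right.1 hAB hi] using h i
  have hfactor (i : ι) : ∑ b ∈ t i, (if b then q i else 1 - q i) =
      (if i ∈ A then q i else 1) * if i ∈ B then 1 - q i else 1 := by
    by_cases hiA : i ∈ A
    · simp [t, hiA, disjoint_left.1 hAB hiA]
    · by_cases hiB : i ∈ B <;> simp [t, hiA, hiB]
  rw [hfilter, ← Fintype.prod_ite_mem A, ← Fintype.prod_ite_mem B, ← prod_mul_distrib]
  exact (prod_univ_sum t fun i b => if b then q i else 1 - q i).symm.trans
    (Finset.prod_congr rfl fun i _ => hfactor i)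

end BernoulliProduct

section FaceParam

variable {n : ℕ}

/-- `faceParam p σ = p_{dim σ}`, and `1` for the empty simplex. -/
def faceParam (p : Fin n → ℝ) (σ : Finset (Fin n)) : ℝ :=
  ∏ i : Fin n, if σ.card = i.1 + 1 then p i else 1

lemma faceParam_of_card_eq (p : Fin n → ℝ) {σ : Finset (Fin n)} {i : Fin n}
    (h : σ.card = i.1 + 1) : faceParam p σ = p i := by
  have hcard (j : Fin n) : σ.card = j.1 + 1 ↔ j = i := by
    rw [h, Fin.ext_iff]
    omega
  simp only [faceParam, hcard, Fintype.prod_ite_eq']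

lemma one_sub_faceParam (p : Fin n → ℝ) {σ : Finset (Fin n)} (hσ : σ.Nonempty) :
    1 - faceParam p σ = faceParam (1 - p) σ := by
  have hle : σ.card ≤ n := by simpa using card_le_univ σ
  have hpos := hσ.card_pos
  have hcard : σ.card = (⟨σ.card - 1, by omega⟩ : Fin n).1 + 1 := (Nat.sub_add_cancel hpos).symm
  rw [faceParam_of_card_eq p hcard, faceParam_of_card_eq _ hcard, Pi.sub_apply, Pi.one_apply]

lemma prod_faceParam (p : Fin n → ℝ) (s : Finset (Finset (Fin n))) :
    ∏ σ ∈ s, faceParam p σ = ∏ i : Fin n, p i ^ scount s (i.1 + 1) := by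
  simp only [faceParam]
  rw [Finset.prod_comm]
  refine Finset.prod_congr rfl fun i _ => ?_
  rw [prod_ite, prod_const, prod_const_one, mul_one, scount]

end FaceParam

section CoinComplex

variable {n : ℕ}

def coinComplex (ω : Finset (Fin n) → Bool) : Finset (Finset (Fin n)) :=
  univ.filter fun σ => ∀ τ ⊆ σ, ω τ = true

def externalFaces (Z : Finset (Finset (Fin n))) : Finset (Finset (Fin n)) :=
  univ.filter fun σ => σ ∉ Z ∧ ∀ τ ∈ σ.powerset, τ ≠ σ → τ ∈ Z

lemma mem_coinComplex {ω : Finset (Fin n) → Bool} {σ : Finset (Fin n)} :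
    σ ∈ coinComplex ω ↔ ∀ τ ⊆ σ, ω τ = true := by
  simp [coinComplex]

lemma sComplex_coinComplex {ω : Finset (Fin n) → Bool} (h : ∅ ∈ coinComplex ω) :
    SComplex (coinComplex ω) := by
  refine ⟨h, fun σ hσ τ hτ => mem_coinComplex.2 fun ρ hρ => ?_⟩
  exact mem_coinComplex.1 hσ ρ (hρ.trans (mem_powerset.1 hτ))

lemma subset_coinComplex_iff {Y : Finset (Finset (Fin n))} (hY : SComplex Y)
    (ω : Finset (Fin n) → Bool) : Y ⊆ coinComplex ω ↔ ∀ σ ∈ Y, ω σ = true := by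
  refine ⟨fun h σ hσ => mem_coinComplex.1 (h hσ) σ subset_rfl, fun h σ hσ => ?_⟩
  exact mem_coinComplex.2 fun τ hτ => h τ (hY.2 σ hσ τ (mem_powerset.2 hτ))

lemma coinComplex_eq_iff {Z : Finset (Finset (Fin n))} (hZ : SComplex Z)
    (ω : Finset (Fin n) → Bool) :
    coinComplex ω = Z ↔ (∀ σ ∈ Z, ω σ = true) ∧ ∀ σ ∈ externalFaces Z, ω σ = false := by
  simp only [externalFaces, mem_filter, mem_univ, true_and, mem_powerset]
  constructor
  · rintro rfl
    refine ⟨fun σ hσ => mem_coinComplex.1 hσ σ subset_rfl, fun σ ⟨hσ, hfaces⟩ => ?_⟩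
    obtain ⟨τ, hτσ, hτ⟩ := not_forall₂.1 (mt mem_coinComplex.2 hσ)
    obtain rfl | hne := eq_or_ne τ σ
    · simpa using hτ
    · exact absurd (mem_coinComplex.1 (hfaces τ hτσ hne) τ subset_rfl) hτ
  · rintro ⟨hZtrue, hext⟩
    ext σ
    refine ⟨fun hσ => ?_, fun hσ => mem_coinComplex.2 fun τ hτ => hZtrue τ (hZ.2 σ hσ τ
      (mem_powerset.2 hτ))⟩
    by_contra hσZ
    -- a minimal face of `σ` outside `Z` is external to `Z`, so its coin shows `false`
    obtain ⟨τ, hτ, hmin⟩ :=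
      (σ.powerset.filter (· ∉ Z)).exists_minimal ⟨σ, by simpa using hσZ⟩
    obtain ⟨hτσ, hτZ⟩ := mem_filter.1 hτ
    have hτext : ∀ ρ ⊆ τ, ρ ≠ τ → ρ ∈ Z := fun ρ hρτ hne => by
      by_contra hρZ
      have hρ : ρ ∈ σ.powerset.filter (· ∉ Z) :=
        mem_filter.2 ⟨mem_powerset.2 (hρτ.trans (mem_powerset.1 hτσ)), hρZ⟩
      exact hne (le_antisymm hρτ (hmin hρ hρτ))
    have := mem_coinComplex.1 hσ τ (mem_powerset.1 hτσ)
    simp_all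

end CoinComplex

section CoinModel

variable {n : ℕ}

lemma mpWeight_eq_prod_faceParam (p : Fin n → ℝ) (Z : Finset (Finset (Fin n))) :
    mpWeight p Z =
      (∏ σ ∈ Z, faceParam p σ) * ∏ σ ∈ externalFaces Z, faceParam (1 - p) σ := by
  have hecount (i : Fin n) : ecount Z i.1 = scount (externalFaces Z) (i.1 + 1) := by
    simp only [ecount, scount, externalFaces, filter_filter, and_comm]
  simp only [prod_faceParam, mpWeight, hecount, Pi.sub_apply, Pi.one_apply, prod_mul_distrib]

lemma sum_bernoulliWeight_subset_coinComplex (p : Fin n → ℝ) {Y : Finset (Finset (Fin n))}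
    (hY : SComplex Y) :
    ∑ ω with Y ⊆ coinComplex ω, bernoulliWeight (faceParam p) ω =
      ∏ i : Fin n, p i ^ scount Y (i.1 + 1) := by
  have h := sum_bernoulliWeight_filter (faceParam p) (disjoint_empty_right Y)
  simp only [notMem_empty, IsEmpty.forall_iff, implies_true, and_true, prod_empty, mul_one] at h
  simp only [subset_coinComplex_iff hY, h, prod_faceParam]

lemma sum_bernoulliWeight_coinComplex_eq (p : Fin n → ℝ) {Z : Finset (Finset (Fin n))}
    (hZ : SComplex Z) :
    ∑ ω with coinComplex ω = Z, bernoulliWeight (faceParam p) ω = mpWeight p Z := by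
  have hdisj : Disjoint Z (externalFaces Z) :=
    disjoint_right.2 fun σ hσ => (mem_filter.1 hσ).2.1
  have hne : ∀ σ ∈ externalFaces Z, σ.Nonempty := fun σ hσ =>
    nonempty_iff_ne_empty.2 fun h => (mem_filter.1 hσ).2.1 (h ▸ hZ.1)
  simp only [coinComplex_eq_iff hZ, sum_bernoulliWeight_filter _ hdisj,
    mpWeight_eq_prod_faceParam]
  rw [Finset.prod_congr rfl fun σ hσ => one_sub_faceParam p (hne σ hσ)]

lemma sum_mpWeight_of_subset (p : Fin n → ℝ) {Y : Finset (Finset (Fin n))} (hY : SComplex Y) :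
    ∑ Z with SComplex Z ∧ Y ⊆ Z, mpWeight p Z = ∏ i : Fin n, p i ^ scount Y (i.1 + 1) := by
  have hmaps : ∀ ω ∈ univ.filter (fun ω => Y ⊆ coinComplex ω),
      coinComplex ω ∈ univ.filter (fun Z => SComplex Z ∧ Y ⊆ Z) := fun ω hω => by
    have hYω := (mem_filter.1 hω).2
    exact mem_filter.2 ⟨mem_univ _, sComplex_coinComplex (hYω hY.1), hYω⟩
  rw [← sum_bernoulliWeight_subset_coinComplex p hY, ← sum_fiberwise_of_maps_to hmaps]
  refine Finset.sum_congr rfl fun Z hZ => ?_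
  obtain ⟨hZc, hYZ⟩ := (mem_filter.1 hZ).2
  rw [← sum_bernoulliWeight_coinComplex_eq p hZc, filter_filter]
  exact Finset.sum_congr (filter_congr fun ω _ => ⟨fun h => ⟨h ▸ hYZ, h⟩, fun h => h.2⟩)
    fun _ _ => rfl

end CoinModel

lemma prb_preimage_finset {α Ω : Type*} [MeasurableSpace Ω] (μ : Measure Ω) [IsFiniteMeasure μ]
    (X : Ω → α) (s : Finset α) (hX : ∀ a ∈ s, MeasurableSet {ω | X ω = a}) :
    prb μ (X ⁻¹' s) = ∑ a ∈ s, prb μ {ω | X ω = a} := by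
  rw [prb, ← sum_measure_preimage_singleton s hX,
    ENNReal.toReal_sum fun a _ => measure_ne_top μ _]
  rfl

theorem multiParam_prob_subset_general (n : ℕ)
    {Ω : Type*} [MeasurableSpace Ω] (μ : Measure Ω) [IsProbabilityMeasure μ]
    (X : Ω → Finset (Finset (Fin n)))
    (hmeas : ∀ Y, MeasurableSet {ω | X ω = Y})
    (hXc : ∀ ω, SComplex (X ω))
    (p : Fin n → ℝ)
    (hdist : ∀ Y : Finset (Finset (Fin n)), SComplex Y →
      prb μ {ω | X ω = Y} = mpWeight p Y) :
    ∀ Y : Finset (Finset (Fin n)), SComplex Y →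
      prb μ {ω | Y ⊆ X ω} = ∏ i : Fin n, p i ^ scount Y (i.1 + 1) := by
  intro Y hY
  have hevent : {ω | Y ⊆ X ω} = X ⁻¹' ↑(univ.filter fun Z => SComplex Z ∧ Y ⊆ Z) := by
    ext ω
    simp [hXc ω]
  rw [hevent, prb_preimage_finset μ X _ fun Z _ => hmeas Z,
    Finset.sum_congr rfl fun Z hZ => hdist Z (mem_filter.1 hZ).2.1, sum_mpWeight_of_subset p hY]

/-- for a multi-parameter random simplicial complex,
`P(Y ⊆ X) = ∏_i p_i^{f_i(Y)}`. -/
theorem multiParam_prob_subset (n : ℕ) (hn : 1 ≤ n)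
    {Ω : Type*} [MeasurableSpace Ω] (μ : Measure Ω) [IsProbabilityMeasure μ]
    (X : Ω → Finset (Finset (Fin n)))
    (hmeas : ∀ Y, MeasurableSet {ω | X ω = Y})
    (hXc : ∀ ω, SComplex (X ω))
    (p : Fin n → ℝ) (hp : ∀ i, p i ∈ Set.Icc (0 : ℝ) 1)
    (hdist : ∀ Y : Finset (Finset (Fin n)), SComplex Y →
      prb μ {ω | X ω = Y} = mpWeight p Y) :
    ∀ Y : Finset (Finset (Fin n)), SComplex Y →
      prb μ {ω | Y ⊆ X ω} = ∏ i : Fin n, p i ^ scount Y (i.1 + 1) :=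
  multiParam_prob_subset_general n μ X hmeas hXc p hdist
end

section
/- Let X be a homogeneous and spatially independent random subcomplex of Δₙ. Then there exists p = (p₀,…,p_{n−1}) ∈ [0,1]^n such that P(X = Y) = ∏_{i=0}^{n−1} p_i^{f_i(Y)} (1−p_i)^{e_i(Y)} for every Y ∈ Sₙ, i.e. X ~ X(n,p). Moreover one may take p_k := P({1,…,k+1} ∈ X | ∂{1,…,k+1} ⊆ X) if P(∂{1,…,k+1} ⊆ X) > 0 and p_k := 0 otherwise, where ∂σ denotes the simplicial complex consisting of all strict subsets of σ. -/
open MeasureTheory Finset Filter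

/-!
Write `F Z = P(Z ⊆ X)`. If `σ` is a maximal simplex of a complex `Y`, then `Y \ {σ}` and the
full simplex `2^σ` are complexes with union `Y` and intersection `∂σ`, so spatial independence
gives `F Y · F ∂σ = F (Y \ {σ}) · F 2^σ`; by homogeneity `F 2^σ / F ∂σ` depends only on `dim σ`
and is `p_{dim σ}`. Peeling off maximal simplices one at a time yields
`F Y = ∏_{∅ ≠ σ ∈ Y} p_{dim σ}`. Finally `X = Y` exactly when `Y ⊆ X` and no external simplex
of `Y` lies in `X`, so inclusion–exclusion over the external simplices turns these products
into `∏ p^{f(Y)} (1 - p)^{e(Y)}`.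
-/

open scoped Pointwise

theorem Finset.prod_one_sub_eq_sum_powerset {ι R : Type*} [DecidableEq ι] [CommRing R]
    (s : Finset ι) (f : ι → R) :
    ∏ i ∈ s, (1 - f i) = ∑ t ∈ s.powerset, (-1) ^ #t * ∏ i ∈ t, f i := by
  simpa using prod_sub (fun _ => (1 : R)) f s

def simplexBoundary {V : Type*} [DecidableEq V] (σ : Finset V) : Finset (Finset V) :=
  σ.powerset.erase σ

namespace SComplex

variable {V : Type*} [DecidableEq V] {Y : Finset (Finset V)} {σ : Finset V}

theorem powerset (σ : Finset V) : SComplex σ.powerset :=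
  ⟨empty_mem_powerset σ, fun _ hτ _ hρ =>
    mem_powerset.mpr ((mem_powerset.mp hρ).trans (mem_powerset.mp hτ))⟩

theorem powerset_subset (hY : SComplex Y) (hσ : σ ∈ Y) : σ.powerset ⊆ Y :=
  fun τ hτ => hY.2 σ hσ τ hτ

theorem simplexBoundary_subset (hY : SComplex Y) (hσ : σ ∈ Y) : simplexBoundary σ ⊆ Y :=
  (erase_subset _ _).trans (hY.powerset_subset hσ)

theorem erase (hY : SComplex Y) (hσ : Maximal (· ∈ Y) σ) (hne : σ ≠ ∅) :
    SComplex (Y.erase σ) := by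
  refine ⟨mem_erase.mpr ⟨hne.symm, hY.1⟩, fun τ hτ ρ hρ => ?_⟩
  obtain ⟨hτσ, hτY⟩ := mem_erase.mp hτ
  refine mem_erase.mpr ⟨?_, hY.2 τ hτY ρ hρ⟩
  rintro rfl
  exact hτσ (le_antisymm (hσ.2 hτY (mem_powerset.mp hρ)) (mem_powerset.mp hρ))

theorem erase_union_powerset (hY : SComplex Y) (hσ : σ ∈ Y) :
    Y.erase σ ∪ σ.powerset = Y := by
  ext τ
  have hτ : τ ⊆ σ → τ ∈ Y := fun h => hY.powerset_subset hσ (mem_powerset.mpr h)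
  by_cases h : τ = σ <;> simp_all

theorem erase_inter_powerset (hY : SComplex Y) (hσ : σ ∈ Y) :
    Y.erase σ ∩ σ.powerset = simplexBoundary σ := by
  ext τ
  have hτ : τ ⊆ σ → τ ∈ Y := fun h => hY.powerset_subset hσ (mem_powerset.mpr h)
  simp only [simplexBoundary, mem_inter, mem_erase, mem_powerset]
  tauto

end SComplex

section External

variable {V : Type*} [DecidableEq V] [Fintype V] {Y S W : Finset (Finset V)}

def extSimplices (Y : Finset (Finset V)) : Finset (Finset V) :=
  univ.filter (fun σ => σ ∉ Y ∧ ∀ τ ∈ σ.powerset, τ ≠ σ → τ ∈ Y)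

theorem mem_extSimplices {σ : Finset V} :
    σ ∈ extSimplices Y ↔ σ ∉ Y ∧ ∀ τ ⊆ σ, τ ≠ σ → τ ∈ Y := by
  simp [extSimplices]

theorem disjoint_extSimplices (Y : Finset (Finset V)) : Disjoint Y (extSimplices Y) :=
  disjoint_right.mpr fun _ hσ => (mem_extSimplices.mp hσ).1

theorem SComplex.empty_notMem_extSimplices (hY : SComplex Y) : ∅ ∉ extSimplices Y :=
  fun h => (mem_extSimplices.mp h).1 hY.1

theorem SComplex.union_of_subset_extSimplices (hY : SComplex Y) (hS : S ⊆ extSimplices Y) :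
    SComplex (Y ∪ S) := by
  refine ⟨mem_union_left _ hY.1, fun τ hτ ρ hρ => ?_⟩
  rcases mem_union.mp hτ with h | h
  · exact mem_union_left _ (hY.2 τ h ρ hρ)
  · by_cases hρτ : ρ = τ
    · exact hρτ ▸ hτ
    · exact mem_union_left _ ((mem_extSimplices.mp (hS h)).2 ρ (mem_powerset.mp hρ) hρτ)

/-- A minimal simplex of `W \ Y` would be external to `Y`. -/
theorem SComplex.eq_of_subset_of_disjoint_extSimplices (hW : SComplex W) (hYW : Y ⊆ W)
    (hext : Disjoint (extSimplices Y) W) : W = Y := by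
  by_contra hne
  obtain ⟨σ, hσ⟩ := (W \ Y).exists_minimal (sdiff_nonempty.mpr fun h => hne (h.antisymm hYW))
  obtain ⟨hσW, hσY⟩ := mem_sdiff.mp hσ.1
  refine disjoint_left.mp hext (mem_extSimplices.mpr ⟨hσY, fun τ hτ hτσ => ?_⟩) hσW
  by_contra hτY
  exact hτσ (le_antisymm hτ (hσ.2 (mem_sdiff.mpr ⟨hW.2 σ hσW τ (mem_powerset.mpr hτ), hτY⟩) hτ))

theorem SComplex.sum_powerset_extSimplices_neg_one_pow {R : Type*} [CommRing R]
    (hY : SComplex Y) (hW : SComplex W) (a : R) :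
    ∑ S ∈ (extSimplices Y).powerset, (-1) ^ #S * (if Y ∪ S ⊆ W then a else 0) =
      if W = Y then a else 0 := by
  by_cases hYW : Y ⊆ W
  swap
  · rw [if_neg fun h => hYW h.ge]
    simp [union_subset_iff, hYW]
  have hind (S : Finset (Finset V)) :
      (if Y ∪ S ⊆ W then a else 0) = (∏ σ ∈ S, if σ ∈ W then 1 else 0) * a := by
    rw [prod_boole, ite_mul, one_mul, zero_mul]
    congr 1
    exact propext (union_subset_iff.trans (and_iff_right hYW))
  simp_rw [hind, ← mul_assoc, ← sum_mul, ← prod_one_sub_eq_sum_powerset]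
  have hcompl (σ : Finset V) : (1 - if σ ∈ W then 1 else 0 : R) = if σ ∉ W then 1 else 0 := by
    split_ifs <;> simp
  simp_rw [hcompl, prod_boole, ite_mul, one_mul, zero_mul]
  congr 1
  refine propext ⟨fun h => hW.eq_of_subset_of_disjoint_extSimplices hYW (disjoint_left.mpr h), ?_⟩
  rintro rfl σ hσ
  exact (mem_extSimplices.mp hσ).1

end External

section Counting

variable {n : ℕ}

theorem scount_erase_empty {V : Type*} [DecidableEq V] (Y : Finset (Finset V)) (k : ℕ) :
    scount (Y.erase ∅) (k + 1) = scount Y (k + 1) := by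
  rw [scount, filter_erase, erase_eq_of_notMem (by simp), scount]

theorem scount_extSimplices (Y : Finset (Finset (Fin n))) (k : ℕ) :
    scount (extSimplices Y) (k + 1) = ecount Y k := by
  rw [scount, extSimplices, ecount, filter_filter]
  congr 1
  exact filter_congr fun _ _ => by tauto

theorem prod_pow_scount {M : Type*} [CommMonoid M] (f : ℕ → M) {S : Finset (Finset (Fin n))}
    (hS : ∅ ∉ S) : ∏ i : Fin n, f i ^ scount S (i + 1) = ∏ σ ∈ S, f (#σ - 1) := by
  have hpos : ∀ σ ∈ S, 0 < #σ := fun σ hσ =>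
    card_pos.mpr (nonempty_iff_ne_empty.mpr (ne_of_mem_of_not_mem hσ hS))
  rw [Fin.prod_univ_eq_prod_range (fun i => f i ^ scount S (i + 1)),
    ← prod_fiberwise_of_maps_to (g := fun σ => #σ - 1) (t := range n) fun σ hσ => ?_]
  · refine prod_congr rfl fun i _ => ?_
    rw [prod_congr rfl fun σ hσ => by rw [(mem_filter.mp hσ).2], prod_const, scount]
    congr 2
    exact filter_congr fun σ hσ => by have := hpos σ hσ; omega
  · have := hpos σ hσ
    have := card_le_univ σ
    simp only [Fintype.card_fin] at this
    exact mem_range.mpr (by omega)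

theorem SComplex.mpWeight_eq {Y : Finset (Finset (Fin n))} (hY : SComplex Y) (p : ℕ → ℝ) :
    mpWeight (fun i => p i) Y =
      (∏ σ ∈ Y.erase ∅, p (#σ - 1)) * ∏ σ ∈ extSimplices Y, (1 - p (#σ - 1)) := by
  rw [mpWeight, prod_mul_distrib, ← prod_pow_scount _ (notMem_erase _ _),
    ← prod_pow_scount (fun k => 1 - p k) hY.empty_notMem_extSimplices]
  simp only [scount_erase_empty, scount_extSimplices]

end Counting

section Permutation

variable {G V : Type*} [Group G] [MulAction G V] [DecidableEq V]

theorem Finset.smul_finset_powerset (g : G) (σ : Finset V) :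
    g • σ.powerset = (g • σ).powerset := by
  ext τ
  rw [← inv_smul_mem_iff, mem_powerset, mem_powerset, subset_smul_finset_iff]

theorem smul_simplexBoundary (g : G) (σ : Finset V) :
    g • simplexBoundary σ = simplexBoundary (g • σ) := by
  rw [simplexBoundary, simplexBoundary, erase_eq, erase_eq, smul_finset_sdiff,
    smul_finset_singleton, smul_finset_powerset]

theorem exists_perm_smul_eq_of_card_eq {s t : Finset V} (h : #s = #t) :
    ∃ g : Equiv.Perm V, g • s = t := by
  have := Set.powersetCard.isPretransitive (α := V) (n := #t)
  obtain ⟨g, hg⟩ := MulAction.exists_smul_eq (Equiv.Perm V)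
    (Set.powersetCard.ofCard h) (Set.powersetCard.ofCard (s := t) rfl)
  exact ⟨g, congrArg Subtype.val hg⟩

end Permutation

section Probability

variable {Ω V : Type*} [MeasurableSpace Ω] (μ : Measure Ω) (X : Ω → Finset (Finset V))

noncomputable def containProb (Z : Finset (Finset V)) : ℝ :=
  prb μ {ω | Z ⊆ X ω}

variable {μ X}

theorem containProb_nonneg (Z : Finset (Finset V)) : 0 ≤ containProb μ X Z :=
  ENNReal.toReal_nonneg

theorem containProb_anti [IsFiniteMeasure μ] {Z₁ Z₂ : Finset (Finset V)} (h : Z₁ ⊆ Z₂) :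
    containProb μ X Z₂ ≤ containProb μ X Z₁ :=
  measureReal_mono fun _ hω => h.trans hω

theorem containProb_singleton_empty [DecidableEq V] [IsProbabilityMeasure μ]
    (hXc : ∀ ω, SComplex (X ω)) : containProb μ X {∅} = 1 := by
  simp [containProb, prb, fun ω => (hXc ω).1]

theorem containProb_eq_sum [DecidableEq V] [Fintype V] [IsFiniteMeasure μ]
    (hmeas : ∀ Y, MeasurableSet {ω | X ω = Y}) (Z : Finset (Finset V)) :
    containProb μ X Z = ∑ W, if Z ⊆ W then prb μ {ω | X ω = W} else 0 := by
  rw [← sum_filter]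
  refine Eq.trans ?_ (sum_measureReal_preimage_singleton _ fun W _ => hmeas W).symm
  simp [containProb, prb, measureReal_def, Set.preimage]

theorem prb_eq_sum_containProb [IsFiniteMeasure μ] [DecidableEq V] [Fintype V]
    (hmeas : ∀ Y, MeasurableSet {ω | X ω = Y}) (hXc : ∀ ω, SComplex (X ω))
    {Y : Finset (Finset V)} (hY : SComplex Y) :
    prb μ {ω | X ω = Y} =
      ∑ S ∈ (extSimplices Y).powerset, (-1) ^ #S * containProb μ X (Y ∪ S) := by
  simp_rw [containProb_eq_sum hmeas, mul_sum]
  rw [sum_comm, ← Fintype.sum_ite_eq' Y fun W => prb μ {ω | X ω = W}]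
  refine sum_congr rfl fun W _ => ?_
  by_cases hW : SComplex W
  · rw [hY.sum_powerset_extSimplices_neg_one_pow hW]
  · have hempty : {ω | X ω = W} = ∅ :=
      Set.eq_empty_of_forall_notMem fun ω (h : X ω = W) => hW (h ▸ hXc ω)
    have hnull : prb μ {ω | X ω = W} = 0 := by
      rw [prb, hempty, measure_empty, ENNReal.toReal_zero]
    simp [hnull]

end Probability

section Homogeneous

variable {n : ℕ} {Ω : Type*} [MeasurableSpace Ω] {μ : Measure Ω}
  {X : Ω → Finset (Finset (Fin n))}

theorem Homogeneous.prb_eq_smul (hhom : Homogeneous μ X) (g : Equiv.Perm (Fin n))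
    (W : Finset (Finset (Fin n))) : prb μ {ω | X ω = g • W} = prb μ {ω | X ω = W} := by
  rw [← hhom g (g • W)]
  show prb μ {ω | g • X ω = g • W} = _
  simp_rw [smul_left_cancel_iff]

theorem Homogeneous.containProb_smul [IsFiniteMeasure μ]
    (hmeas : ∀ Y, MeasurableSet {ω | X ω = Y}) (hhom : Homogeneous μ X) (g : Equiv.Perm (Fin n))
    (Z : Finset (Finset (Fin n))) :
    containProb μ X (g • Z) = containProb μ X Z := by
  rw [containProb_eq_sum hmeas, containProb_eq_sum hmeas,
    ← Equiv.sum_comp (MulAction.toPerm g)]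
  simp only [MulAction.toPerm_apply, smul_finset_subset_smul_finset_iff, hhom.prb_eq_smul]

theorem card_stdSimp {k : ℕ} (hk : k < n) : #(stdSimp n k) = k + 1 := by
  have : stdSimp n k = Iic ⟨k, hk⟩ := by
    ext v
    simp [stdSimp, Fin.le_def]
  rw [this, Fin.card_Iic]

variable (μ X) in
noncomputable def mpParam (k : ℕ) : ℝ :=
  if 0 < containProb μ X (simplexBoundary (stdSimp n k)) then
    condP μ {ω | stdSimp n k ∈ X ω} {ω | simplexBoundary (stdSimp n k) ⊆ X ω}
  else 0

theorem mpParam_mem_Icc [IsFiniteMeasure μ] (k : ℕ) : mpParam μ X k ∈ Set.Icc 0 1 := by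
  unfold mpParam
  split_ifs with h
  · exact ⟨div_nonneg ENNReal.toReal_nonneg h.le,
      div_le_one_of_le₀ (measureReal_mono Set.inter_subset_right) h.le⟩
  · exact ⟨le_rfl, zero_le_one⟩

theorem condP_mem_simplexBoundary (σ : Finset (Fin n)) :
    condP μ {ω | σ ∈ X ω} {ω | simplexBoundary σ ⊆ X ω} =
      containProb μ X σ.powerset / containProb μ X (simplexBoundary σ) := by
  rw [condP, containProb, ← insert_erase (mem_powerset_self σ)]
  simp_rw [insert_subset_iff]
  rfl

theorem mpParam_card_sub_one [IsFiniteMeasure μ] (hmeas : ∀ Y, MeasurableSet {ω | X ω = Y})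
    (hhom : Homogeneous μ X) {σ : Finset (Fin n)} (hσ : σ ≠ ∅) :
    mpParam μ X (#σ - 1) = if 0 < containProb μ X (simplexBoundary σ) then
      containProb μ X σ.powerset / containProb μ X (simplexBoundary σ) else 0 := by
  have hpos : 0 < #σ := card_pos.mpr (nonempty_iff_ne_empty.mpr hσ)
  have hle : #σ ≤ n := by simpa using card_le_univ σ
  set k := #σ - 1
  obtain ⟨g, hg⟩ := exists_perm_smul_eq_of_card_eq (s := stdSimp n k) (t := σ)
    (by rw [card_stdSimp (by omega)]; omega)
  rw [mpParam, condP_mem_simplexBoundary, ← hg, ← smul_simplexBoundary, ← smul_finset_powerset,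
    hhom.containProb_smul hmeas, hhom.containProb_smul hmeas]

end Homogeneous

section SpatialIndependence

variable {n : ℕ} {Ω : Type*} [MeasurableSpace Ω] {μ : Measure Ω}
  {X : Ω → Finset (Finset (Fin n))}

theorem containProb_eq_mul_of_maximal [IsFiniteMeasure μ]
    (hmeas : ∀ Y, MeasurableSet {ω | X ω = Y}) (hhom : Homogeneous μ X) (hsi : SpatInd μ X)
    {Y : Finset (Finset (Fin n))} (hY : SComplex Y) {σ : Finset (Fin n)}
    (hσ : Maximal (· ∈ Y) σ) (hne : σ ≠ ∅) :
    containProb μ X Y = containProb μ X (Y.erase σ) * mpParam μ X (#σ - 1) := by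
  have hsplit : containProb μ X Y * containProb μ X (simplexBoundary σ) =
      containProb μ X (Y.erase σ) * containProb μ X σ.powerset := by
    have := hsi _ _ (hY.erase hσ hne) (SComplex.powerset σ)
    rwa [hY.erase_union_powerset hσ.1, hY.erase_inter_powerset hσ.1] at this
  rw [mpParam_card_sub_one hmeas hhom hne]
  split_ifs with hpos
  · rw [mul_div_assoc']
    exact eq_div_of_mul_eq hpos.ne' hsplit
  · have hzero : containProb μ X (simplexBoundary σ) = 0 :=
      (not_lt.mp hpos).antisymm (containProb_nonneg _)
    rw [mul_zero]
    exact (hzero ▸ containProb_anti (hY.simplexBoundary_subset hσ.1)).antisymm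
      (containProb_nonneg _)

theorem containProb_eq_prod [IsProbabilityMeasure μ]
    (hmeas : ∀ Y, MeasurableSet {ω | X ω = Y}) (hXc : ∀ ω, SComplex (X ω))
    (hhom : Homogeneous μ X) (hsi : SpatInd μ X) {Y : Finset (Finset (Fin n))}
    (hY : SComplex Y) : containProb μ X Y = ∏ σ ∈ Y.erase ∅, mpParam μ X (#σ - 1) := by
  induction Y using Finset.strongInduction with
  | H Y ih =>
  rcases (Y.erase ∅).eq_empty_or_nonempty with h | h
  · rw [h, prod_empty, ← containProb_singleton_empty hXc (μ := μ), ← insert_erase hY.1, h]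
    rfl
  · obtain ⟨σ, hσ⟩ := (Y.erase ∅).exists_maximal h
    have hne : σ ≠ ∅ := (mem_erase.mp hσ.1).1
    have hσY : Maximal (· ∈ Y) σ := ⟨mem_of_mem_erase hσ.1, fun τ hτ hστ =>
      hσ.2 (mem_erase.mpr ⟨fun h => hne (subset_empty.mp (h ▸ hστ)), hτ⟩) hστ⟩
    rw [containProb_eq_mul_of_maximal hmeas hhom hsi hY hσY hne,
      ih _ (erase_ssubset hσY.1) (hY.erase hσY hne), erase_right_comm, prod_erase_mul _ _ hσ.1]

theorem prb_eq_mpWeight [IsProbabilityMeasure μ]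
    (hmeas : ∀ Y, MeasurableSet {ω | X ω = Y}) (hXc : ∀ ω, SComplex (X ω))
    (hhom : Homogeneous μ X) (hsi : SpatInd μ X) {Y : Finset (Finset (Fin n))}
    (hY : SComplex Y) : prb μ {ω | X ω = Y} = mpWeight (fun i => mpParam μ X i) Y := by
  set p : Finset (Fin n) → ℝ := fun σ => mpParam μ X (#σ - 1)
  have hfactor : ∀ S ∈ (extSimplices Y).powerset,
      containProb μ X (Y ∪ S) = (∏ σ ∈ Y.erase ∅, p σ) * ∏ σ ∈ S, p σ := by
    intro S hS
    have hSext := mem_powerset.mp hS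
    rw [containProb_eq_prod hmeas hXc hhom hsi (hY.union_of_subset_extSimplices hSext),
      erase_union_distrib, erase_eq_of_notMem fun h => hY.empty_notMem_extSimplices (hSext h),
      prod_union ((disjoint_extSimplices Y).mono (erase_subset _ _) hSext)]
  rw [prb_eq_sum_containProb hmeas hXc hY, sum_congr rfl fun S hS => by rw [hfactor S hS],
    hY.mpWeight_eq, prod_one_sub_eq_sum_powerset, mul_sum]
  exact sum_congr rfl fun S _ => by ring

end SpatialIndependence

theorem homogeneous_spatiallyIndependent_isMultiParam_general (n : ℕ)
    {Ω : Type*} [MeasurableSpace Ω] (μ : Measure Ω) [IsProbabilityMeasure μ]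
    (X : Ω → Finset (Finset (Fin n)))
    (hmeas : ∀ Y, MeasurableSet {ω | X ω = Y})
    (hXc : ∀ ω, SComplex (X ω))
    (hhom : Homogeneous μ X) (hsi : SpatInd μ X) :
    ∃ p : Fin n → ℝ, (∀ i, p i ∈ Set.Icc (0 : ℝ) 1) ∧
      (∀ Y : Finset (Finset (Fin n)), SComplex Y →
        prb μ {ω | X ω = Y} = mpWeight p Y) ∧
      ∀ k : Fin n,
        p k = if 0 < prb μ {ω | (stdSimp n k.1).powerset.erase (stdSimp n k.1) ⊆ X ω} then
            condP μ {ω | stdSimp n k.1 ∈ X ω}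
              {ω | (stdSimp n k.1).powerset.erase (stdSimp n k.1) ⊆ X ω}
          else 0 :=
  ⟨fun k => mpParam μ X k, fun k => mpParam_mem_Icc k,
    fun _ hY => prb_eq_mpWeight hmeas hXc hhom hsi hY, fun _ => rfl⟩

/-- every homogeneous and spatially independent random subcomplex of `Δₙ`
is a multi-parameter random simplicial complex, with parameters
`p_k = P(σ_k ∈ X | ∂σ_k ⊆ X)` for a `k`-simplex `σ_k` (and `p_k = 0` if
`P(∂σ_k ⊆ X) = 0`). -/
theorem homogeneous_spatiallyIndependent_isMultiParam (n : ℕ) (hn : 1 ≤ n)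
    {Ω : Type*} [MeasurableSpace Ω] (μ : Measure Ω) [IsProbabilityMeasure μ]
    (X : Ω → Finset (Finset (Fin n)))
    (hmeas : ∀ Y, MeasurableSet {ω | X ω = Y})
    (hXc : ∀ ω, SComplex (X ω))
    (hhom : Homogeneous μ X) (hsi : SpatInd μ X) :
    ∃ p : Fin n → ℝ, (∀ i, p i ∈ Set.Icc (0 : ℝ) 1) ∧
      (∀ Y : Finset (Finset (Fin n)), SComplex Y →
        prb μ {ω | X ω = Y} = mpWeight p Y) ∧
      ∀ k : Fin n,
        p k = if 0 < prb μ {ω | (stdSimp n k.1).powerset.erase (stdSimp n k.1) ⊆ X ω} then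
            condP μ {ω | stdSimp n k.1 ∈ X ω}
              {ω | (stdSimp n k.1).powerset.erase (stdSimp n k.1) ⊆ X ω}
          else 0 :=
  homogeneous_spatiallyIndependent_isMultiParam_general n μ X hmeas hXc hhom hsi
end

section
/- Let X be a homogeneous and spatially independent random subcomplex of Δₙ, and let 0 ≤ i ≤ k ≤ n−1. Then q_i^{k+1} ≥ q_k^{i+1}. -/
open MeasureTheory Finset Filter


section Aux

open Finset MeasureTheory

/-! ### Arithmetic lemmas for log-concave sequences -/

private lemma seq_pow_step (a : ℕ → ℝ) (K : ℕ) (h0 : a 0 = 1) (hnn : ∀ m, 0 ≤ a m)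
    (hmono : ∀ m, a (m+1) ≤ a m)
    (hlc : ∀ m, 1 ≤ m → m + 1 ≤ K → a (m+1) * a (m-1) ≤ a m ^ 2) :
    ∀ m, 1 ≤ m → m + 1 ≤ K → a (m+1) ^ m ≤ a m ^ (m+1) := by
  intro m
  induction m with
  | zero => omega
  | succ p ih =>
    intro _ hK
    rcases Nat.eq_zero_or_pos p with rfl | hp
    · have h := hlc 1 le_rfl hK
      simpa [h0] using h
    · have ihp := ih hp (by omega)
      rcases eq_or_lt_of_le (hnn (p+1)) with hz | hpos
      · have h2 : a (p+2) = 0 := le_antisymm (by rw [hz]; exact hmono (p+1)) (hnn (p+2))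
        rw [h2, ← hz]
        simp [zero_pow, Nat.succ_ne_zero]
      · have h1 : a (p+2) * a p ≤ a (p+1) ^ 2 := by
          have := hlc (p+1) (by omega) (by omega)
          simpa using this
        have key : a (p+2) ^ (p+1) * a (p+1) ^ p ≤ a (p+1) ^ (p+2) * a (p+1) ^ p := by
          calc a (p+2) ^ (p+1) * a (p+1) ^ p
              ≤ a (p+2) ^ (p+1) * a p ^ (p+1) := by
                apply mul_le_mul_of_nonneg_left ihp (pow_nonneg (hnn _) _)
            _ = (a (p+2) * a p) ^ (p+1) := by rw [mul_pow]
            _ ≤ (a (p+1) ^ 2) ^ (p+1) := by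
                apply pow_le_pow_left₀ (mul_nonneg (hnn _) (hnn _)) h1
            _ = a (p+1) ^ (p+2) * a (p+1) ^ p := by ring
        exact le_of_mul_le_mul_right key (pow_pos hpos p)

private lemma seq_pow_main (a : ℕ → ℝ) (K : ℕ) (h0 : a 0 = 1) (hnn : ∀ m, 0 ≤ a m)
    (hmono : ∀ m, a (m+1) ≤ a m)
    (hlc : ∀ m, 1 ≤ m → m + 1 ≤ K → a (m+1) * a (m-1) ≤ a m ^ 2) :
    ∀ i k, i ≤ k → k + 1 ≤ K → a (k+1) ^ (i+1) ≤ a (i+1) ^ (k+1) := by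
  intro i k
  induction k with
  | zero => intro hik _; interval_cases i; exact le_rfl
  | succ p ih =>
    intro hik hK
    rcases Nat.lt_or_ge i (p+1) with hi | hi
    · have hs := seq_pow_step a K h0 hnn hmono hlc (p+1) (by omega) hK
      have ihp := ih (by omega) (by omega)
      have chain : (a (p+2) ^ (i+1)) ^ (p+1) ≤ (a (i+1) ^ (p+2)) ^ (p+1) := by
        calc (a (p+2) ^ (i+1)) ^ (p+1) = (a (p+2) ^ (p+1)) ^ (i+1) := by ring
          _ ≤ (a (p+1) ^ (p+2)) ^ (i+1) := pow_le_pow_left₀ (pow_nonneg (hnn _) _) hs _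
          _ = (a (p+1) ^ (i+1)) ^ (p+2) := by ring
          _ ≤ (a (i+1) ^ (p+1)) ^ (p+2) := pow_le_pow_left₀ (pow_nonneg (hnn _) _) ihp _
          _ = (a (i+1) ^ (p+2)) ^ (p+1) := by ring
      exact le_of_pow_le_pow_left₀ (by omega) (pow_nonneg (hnn _) _) chain
    · have : i = p + 1 := by omega
      subst this; exact le_rfl

/-! ### Combinatorial lemmas about standard simplices -/

private def sLow (n m : ℕ) : Finset (Fin n) := Finset.univ.filter (fun v => (v : ℕ) < m)

private def sHigh (n m : ℕ) : Finset (Fin n) :=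
  Finset.univ.filter (fun v => 1 ≤ (v : ℕ) ∧ (v : ℕ) ≤ m)

private lemma sLow_subset (n m : ℕ) : sLow n m ⊆ sLow n (m+1) := by
  intro v; simp only [sLow, mem_filter, mem_univ, true_and]; omega

private lemma sHigh_subset (n m : ℕ) : sHigh n m ⊆ sLow n (m+1) := by
  intro v; simp only [sLow, sHigh, mem_filter, mem_univ, true_and]; omega

private lemma sLow_inter_sHigh (n m : ℕ) : sLow n m ∩ sHigh n m = sHigh n (m-1) := by
  ext v; simp only [sLow, sHigh, mem_inter, mem_filter, mem_univ, true_and]; omega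

private lemma sLow_zero (n : ℕ) : sLow n 0 = ∅ := by
  ext v; simp [sLow]

private lemma sLow_image (n m : ℕ) (hm : m < n) [NeZero n] :
    (sLow n m).image (⇑(Equiv.addLeft (1 : Fin n))) = sHigh n m := by
  have hone : ((1 : Fin n) : ℕ) = 1 % n := rfl
  ext w
  simp only [sLow, sHigh, Finset.mem_image, mem_filter, mem_univ, true_and,
    Equiv.coe_addLeft]
  constructor
  · rintro ⟨v, hv, rfl⟩
    have hn2 : 2 ≤ n := by omega
    have h1 : ((1 : Fin n) : ℕ) = 1 := by rw [hone]; exact Nat.mod_eq_of_lt (by omega)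
    have : ((1 + v : Fin n) : ℕ) = 1 + (v : ℕ) := by
      rw [Fin.val_add, h1]; exact Nat.mod_eq_of_lt (by omega)
    omega
  · rintro ⟨hw1, hw2⟩
    have hn2 : 2 ≤ n := by omega
    have h1 : ((1 : Fin n) : ℕ) = 1 := by rw [hone]; exact Nat.mod_eq_of_lt (by omega)
    refine ⟨⟨(w : ℕ) - 1, by omega⟩, by simp; omega, ?_⟩
    apply Fin.ext
    rw [Fin.val_add, h1]
    simp only
    rw [Nat.mod_eq_of_lt (by omega)]
    omega

private lemma powerset_inter' {V : Type*} [DecidableEq V] (s t : Finset V) :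
    (s ∩ t).powerset = s.powerset ∩ t.powerset := by
  ext u; simp only [Finset.mem_powerset, Finset.mem_inter, Finset.subset_inter_iff]

private lemma sComplex_powerset {V : Type*} [DecidableEq V] (s : Finset V) :
    SComplex s.powerset := by
  refine ⟨by simp, fun σ hσ τ hτ => ?_⟩
  simp only [Finset.mem_powerset] at *
  exact hτ.trans hσ

/-! ### Probability lemmas -/

section Prob
variable {Ω : Type*} [MeasurableSpace Ω] (μ : Measure Ω) [IsProbabilityMeasure μ]

private lemma prb_nonneg' (A : Set Ω) : 0 ≤ prb μ A := ENNReal.toReal_nonneg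

private lemma prb_mono' {A B : Set Ω} (h : A ⊆ B) : prb μ A ≤ prb μ B :=
  ENNReal.toReal_mono (measure_ne_top μ B) (measure_mono h)

private lemma prb_decomp {n : ℕ} (X : Ω → Finset (Finset (Fin n)))
    (hmeas : ∀ Y, MeasurableSet {ω | X ω = Y}) (p : Finset (Finset (Fin n)) → Prop)
    [DecidablePred p] :
    prb μ {ω | p (X ω)} = ∑ Y ∈ Finset.univ.filter p, prb μ {ω | X ω = Y} := by
  have hset : {ω | p (X ω)} = ⋃ Y ∈ (Finset.univ.filter p : Finset (Finset (Finset (Fin n)))),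
      {ω | X ω = Y} := by
    ext ω; simp
  rw [hset, prb, measure_biUnion_finset ?_ (fun Y _ => hmeas Y), ENNReal.toReal_sum
    (fun Y _ => measure_ne_top μ _)]
  · rfl
  · intro Y _ Z _ hne
    simp only [Set.disjoint_left]
    intro ω h1 h2
    exact hne (h1.symm.trans h2)

private lemma prb_mem_image {n : ℕ} (X : Ω → Finset (Finset (Fin n)))
    (hmeas : ∀ Y, MeasurableSet {ω | X ω = Y}) (hhom : Homogeneous μ X)
    (g : Equiv.Perm (Fin n)) (σ : Finset (Fin n)) :
    prb μ {ω | σ.image ⇑g ∈ X ω} = prb μ {ω | σ ∈ X ω} := by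
  classical
  set T : Finset (Finset (Fin n)) → Finset (Finset (Fin n)) :=
    fun Y => Y.image (fun τ => τ.image ⇑g) with hT
  set T' : Finset (Finset (Fin n)) → Finset (Finset (Fin n)) :=
    fun Y => Y.image (fun τ => τ.image ⇑g.symm) with hT'
  have hTT' : ∀ Y, T (T' Y) = Y := by
    intro Y
    simp only [hT, hT', Finset.image_image]
    rw [show ((fun τ => Finset.image (⇑g) τ) ∘ fun τ => Finset.image (⇑g.symm) τ)
        = id from ?_, Finset.image_id]
    funext τ
    simp [Finset.image_image, Function.comp_def]
  have hT'T : ∀ Y, T' (T Y) = Y := by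
    intro Y
    simp only [hT, hT', Finset.image_image]
    rw [show ((fun τ => Finset.image (⇑g.symm) τ) ∘ fun τ => Finset.image (⇑g) τ)
        = id from ?_, Finset.image_id]
    funext τ
    simp [Finset.image_image, Function.comp_def]
  have hkey : ∀ Y, prb μ {ω | X ω = T Y} = prb μ {ω | X ω = Y} := by
    intro Y
    have h1 := hhom g (T Y)
    have h2 : {ω | Finset.image (fun τ => τ.image (⇑g)) (X ω) = T Y} = {ω | X ω = Y} := by
      ext ω
      simp only [Set.mem_setOf_eq]
      constructor
      · intro h
        have := congrArg T' h
        rwa [hT'T, hT'T] at this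
      · intro h; rw [h]
    rw [← h1, h2]
  have hmem : ∀ Y, σ.image ⇑g ∈ T Y ↔ σ ∈ Y := by
    intro Y
    simp only [hT, Finset.mem_image]
    constructor
    · rintro ⟨τ, hτ, hτ2⟩
      have hts : σ = τ := by
        have := congrArg (Finset.image ⇑g.symm) hτ2
        simpa [Finset.image_image, Function.comp_def] using this.symm
      rwa [hts]
    · intro h; exact ⟨σ, h, rfl⟩
  rw [prb_decomp μ X hmeas (fun Y => σ.image ⇑g ∈ Y), prb_decomp μ X hmeas (fun Y => σ ∈ Y)]
  refine Finset.sum_nbij' (fun Y => T' Y) (fun Y => T Y) ?_ ?_ ?_ ?_ ?_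
  · intro Y hY
    simp only [Finset.mem_filter, Finset.mem_univ, true_and] at hY ⊢
    rw [← hmem (T' Y), hTT']; exact hY
  · intro Y hY
    simp only [Finset.mem_filter, Finset.mem_univ, true_and] at hY ⊢
    rw [hmem]; exact hY
  · intro Y _; exact hTT' Y
  · intro Y _; exact hT'T Y
  · intro Y _
    rw [← hkey (T' Y), hTT']

end Prob

end Aux

/-- `q_i^{k+1} ≥ q_k^{i+1}` for `0 ≤ i ≤ k ≤ n-1`. -/
theorem qpar_pow_le (n : ℕ)
    {Ω : Type*} [MeasurableSpace Ω] (μ : Measure Ω) [IsProbabilityMeasure μ]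
    (X : Ω → Finset (Finset (Fin n)))
    (hmeas : ∀ Y, MeasurableSet {ω | X ω = Y})
    (hXc : ∀ ω, SComplex (X ω))
    (hhom : Homogeneous μ X) (hsi : SpatInd μ X)
    (i k : ℕ) (hik : i ≤ k) (hk : k ≤ n - 1) (hn : 1 ≤ n) :
    qpar μ X (k : ℤ) ^ (i + 1) ≤ qpar μ X (i : ℤ) ^ (k + 1) := by
  classical
  -- the sequence A m = P(sLow n m ∈ X), so that qpar μ X j = A (j+1)
  set A : ℕ → ℝ := fun m => prb μ {ω | sLow n m ∈ X ω} with hA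
  have hev : ∀ s : Finset (Fin n), {ω | s.powerset ⊆ X ω} = {ω | s ∈ X ω} := by
    intro s
    ext ω
    simp only [Set.mem_setOf_eq]
    constructor
    · intro h; exact h (Finset.mem_powerset_self s)
    · intro h τ hτ; exact (hXc ω).2 s h τ hτ
  have h0 : A 0 = 1 := by
    have huniv : {ω | sLow n 0 ∈ X ω} = Set.univ := by
      ext ω; simp only [Set.mem_setOf_eq, Set.mem_univ, iff_true, sLow_zero]
      exact (hXc ω).1
    simp [hA, huniv, prb]
  have hnn : ∀ m, 0 ≤ A m := fun m => prb_nonneg' μ _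
  have hmono : ∀ m, A (m+1) ≤ A m := by
    intro m
    apply prb_mono'
    intro ω hω
    exact (hXc ω).2 _ hω _ (Finset.mem_powerset.mpr (sLow_subset n m))
  have hlc : ∀ m, 1 ≤ m → m + 1 ≤ n → A (m+1) * A (m-1) ≤ A m ^ 2 := by
    intro m hm1 hmn
    haveI : NeZero n := ⟨by omega⟩
    set g : Equiv.Perm (Fin n) := Equiv.addLeft (1 : Fin n) with hg
    have himg : prb μ {ω | sHigh n m ∈ X ω} = A m := by
      rw [hA]
      rw [← sLow_image n m (by omega)]
      exact prb_mem_image μ X hmeas hhom g (sLow n m)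
    have himg' : prb μ {ω | sHigh n (m-1) ∈ X ω} = A (m-1) := by
      rw [hA]
      rw [← sLow_image n (m-1) (by omega)]
      exact prb_mem_image μ X hmeas hhom g (sLow n (m-1))
    have hspat := hsi (sLow n m).powerset (sHigh n m).powerset
      (sComplex_powerset _) (sComplex_powerset _)
    have e1 : {ω | (sLow n m).powerset ∪ (sHigh n m).powerset ⊆ X ω}
        = {ω | sLow n m ∈ X ω} ∩ {ω | sHigh n m ∈ X ω} := by
      ext ω
      simp only [Set.mem_setOf_eq, Set.mem_inter_iff, Finset.union_subset_iff]
      constructor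
      · rintro ⟨h1, h2⟩
        exact ⟨h1 (Finset.mem_powerset_self _), h2 (Finset.mem_powerset_self _)⟩
      · rintro ⟨h1, h2⟩
        exact ⟨fun τ hτ => (hXc ω).2 _ h1 τ hτ, fun τ hτ => (hXc ω).2 _ h2 τ hτ⟩
    have e2 : {ω | (sLow n m).powerset ∩ (sHigh n m).powerset ⊆ X ω}
        = {ω | sHigh n (m-1) ∈ X ω} := by
      rw [← powerset_inter', sLow_inter_sHigh]
      exact hev _
    rw [e1, e2, hev, hev, himg, himg'] at hspat
    have hsub : A (m+1) ≤ prb μ ({ω | sLow n m ∈ X ω} ∩ {ω | sHigh n m ∈ X ω}) := by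
      apply prb_mono'
      intro ω hω
      refine ⟨(hXc ω).2 _ hω _ (Finset.mem_powerset.mpr (sLow_subset n m)),
        (hXc ω).2 _ hω _ (Finset.mem_powerset.mpr (sHigh_subset n m))⟩
    calc A (m+1) * A (m-1)
        ≤ prb μ ({ω | sLow n m ∈ X ω} ∩ {ω | sHigh n m ∈ X ω}) * A (m-1) :=
          mul_le_mul_of_nonneg_right hsub (hnn _)
      _ = A m * A m := hspat
      _ = A m ^ 2 := (sq (A m)).symm
  have hq : ∀ j : ℕ, qpar μ X (j : ℤ) = A (j+1) := by
    intro j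
    rw [qpar, if_neg (by omega)]
    have : stdSimp n (j : ℤ) = sLow n (j+1) := by
      ext v
      simp only [stdSimp, sLow, Finset.mem_filter, Finset.mem_univ, true_and]
      omega
    rw [this]
  rw [hq k, hq i]
  exact seq_pow_main A n h0 hnn hmono hlc i k hik (by omega)
end
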